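/- Let Φ : ℤ³ → ℂ be Hermitian positive on Δ(N₁,N₂,N₃), and let A be the matrix indexed by S(N₁,N₂,N₃) with entries A(p,p') = Φ(p − p'). Suppose the kernel of A (as a linear map on functions S(N₁,N₂,N₃) → ℂ) is one-dimensional and is spanned by a nonzero vector d : S(N₁,N₂,N₃) → ℂ. Then the trigonometric polynomial f(α,β,γ) = |∑_{p ∈ S(N₁,N₂,N₃)} d(p)·exp(i(p₁α + p₂β + p₃γ))|² is extremal in Q(N₁,N₂,N₃): whenever f = g + h with g, h ∈ Q(N₁,N₂,N₃), there exists a real constant c ≥ 0 with g = c·f. -/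

import Mathlib

open Complex ComplexOrder

noncomputable section

/-- The lattice box `S(N₁,N₂,N₃)`. -/
def Sbox (N₁ N₂ N₃ : ℕ) : Finset (ℤ × ℤ × ℤ) :=
  Finset.Icc (0, 0, 0) ((N₁ : ℤ), (N₂ : ℤ), (N₃ : ℤ))

/-- The character `exp(i(kα + ℓβ + mγ))`. -/
def eChar (δ : ℤ × ℤ × ℤ) (v : ℝ × ℝ × ℝ) : ℂ :=
  Complex.exp (Complex.I *
    ((δ.1 : ℂ) * (v.1 : ℂ) + (δ.2.1 : ℂ) * (v.2.1 : ℂ) + (δ.2.2 : ℂ) * (v.2.2 : ℂ)))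

/-- `Φ` is Hermitian positive on `Δ(N₁,N₂,N₃)`. -/
def HermPos (N₁ N₂ N₃ : ℕ) (Φ : ℤ × ℤ × ℤ → ℂ) : Prop :=
  ∀ (n : ℕ) (x : Fin n → ℤ × ℤ × ℤ), (∀ i, x i ∈ Sbox N₁ N₂ N₃) →
    ∀ ξ : Fin n → ℂ, 0 ≤ ∑ i, ∑ j, ξ i * (starRingEnd ℂ) (ξ j) * Φ (x i - x j)

/-- `Q(N₁,N₂,N₃)`: finite sums of squared moduli of trig polynomials with frequencies in `S`. -/
def QSet (N₁ N₂ N₃ : ℕ) : Set ((ℝ × ℝ × ℝ) → ℂ) :=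
  { f | ∃ (r : ℕ) (q : Fin r → (ℤ × ℤ × ℤ) → ℂ),
      f = fun v => ∑ j, (‖∑ p ∈ Sbox N₁ N₂ N₃, q j p * eChar p v‖ : ℂ) ^ 2 }

/-!
Expanding `|∑ p, q p e^{i p·v}|²` gives a trigonometric polynomial whose coefficient vector
`c_q` (the autocorrelation of `q`) satisfies `∑ δ, Φ (-δ) c_q δ = q* A q`. The characters
`e^{i p·v}` are linearly independent (Dedekind), so `f = g + h` forces
`c_d = ∑ c_{g_j} + ∑ c_{h_k}`; pairing with `Φ` gives
`0 = d* A d = ∑ g_j* A g_j + ∑ h_k* A h_k`, a sum of nonnegative terms since `A` is positive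
semidefinite. Hence every `g_j` lies in
`ker A = ℂ d`, say `g_j = c_j d`, and `g = (∑ |c_j|²) f`.
-/

open Matrix

lemma eChar_add (p q : ℤ × ℤ × ℤ) (v : ℝ × ℝ × ℝ) :
    eChar (p + q) v = eChar p v * eChar q v := by
  simp only [eChar, ← Complex.exp_add, Prod.fst_add, Prod.snd_add]
  push_cast
  ring_nf

lemma eChar_map_add (p : ℤ × ℤ × ℤ) (v w : ℝ × ℝ × ℝ) :
    eChar p (v + w) = eChar p v * eChar p w := by
  simp only [eChar, ← Complex.exp_add, Prod.fst_add, Prod.snd_add]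
  push_cast
  ring_nf

lemma conj_eChar (p : ℤ × ℤ × ℤ) (v : ℝ × ℝ × ℝ) :
    starRingEnd ℂ (eChar p v) = eChar (-p) v := by
  simp only [eChar, ← Complex.exp_conj, map_mul, map_add, Complex.conj_I, Complex.conj_ofReal,
    map_intCast, Prod.fst_neg, Prod.snd_neg]
  push_cast
  ring_nf

def eCharAddChar (p : ℤ × ℤ × ℤ) : AddChar (ℝ × ℝ × ℝ) ℂ where
  toFun := eChar p
  map_zero_eq_one' := by simp [eChar]
  map_add_eq_mul' := eChar_map_add p

lemma int_eq_of_forall_exp_I_mul_eq {k l : ℤ}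
    (h : ∀ t : ℝ, Complex.exp (Complex.I * (k * t)) = Complex.exp (Complex.I * (l * t))) :
    k = l := by
  -- at `t = π / (k - l)` the quotient of the two sides is `e^{iπ} = -1`
  by_contra hkl
  have hkl' : ((k : ℂ) - l) ≠ 0 := sub_ne_zero.mpr (by exact_mod_cast hkl)
  have h1 := h (Real.pi / (k - l))
  have : Complex.exp (Complex.I * ((k - l) * ((Real.pi / (k - l) : ℝ) : ℂ))) = 1 := by
    rw [sub_mul, mul_sub, Complex.exp_sub, h1, div_self (Complex.exp_ne_zero _)]
  push_cast at this
  rw [mul_div_cancel₀ _ hkl', mul_comm, Complex.exp_pi_mul_I] at this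
  norm_num at this

lemma eChar_injective : Function.Injective eChar := by
  intro p q h
  have h1 := fun t : ℝ => congrFun h (t, 0, 0)
  have h2 := fun t : ℝ => congrFun h (0, t, 0)
  have h3 := fun t : ℝ => congrFun h (0, 0, t)
  simp only [eChar, Complex.ofReal_zero, mul_zero, add_zero, zero_add] at h1 h2 h3
  exact Prod.ext (int_eq_of_forall_exp_I_mul_eq h1)
    (Prod.ext (int_eq_of_forall_exp_I_mul_eq h2) (int_eq_of_forall_exp_I_mul_eq h3))

lemma linearIndependent_eChar : LinearIndependent ℂ eChar :=
  (linearIndependent_monoidHom (Multiplicative (ℝ × ℝ × ℝ)) ℂ).comp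
    (fun p => (eCharAddChar p).toMonoidHom) fun _ _ h =>
      eChar_injective (congrArg (fun χ : Multiplicative (ℝ × ℝ × ℝ) →* ℂ => ⇑χ) h)

section Autocorrelation

variable {ι : Type*} [Fintype ι] (x : ι → ℤ × ℤ × ℤ) (w : ι → ℂ)

def autocorrelation : (ℤ × ℤ × ℤ) →₀ ℂ :=
  ∑ i, ∑ j, Finsupp.single (x i - x j) (w i * starRingEnd ℂ (w j))

lemma linearCombination_eChar_autocorrelation :
    Finsupp.linearCombination ℂ eChar (autocorrelation x w)
      = fun v => (‖∑ i, w i * eChar (x i) v‖ : ℂ) ^ 2 := by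
  funext v
  rw [← Complex.mul_conj', map_sum, Finset.sum_mul_sum]
  simp only [autocorrelation, map_sum, Finsupp.linearCombination_single, Finset.sum_apply,
    Pi.smul_apply, smul_eq_mul, map_mul, conj_eChar, sub_eq_add_neg, eChar_add]
  refine Finset.sum_congr rfl fun i _ => Finset.sum_congr rfl fun j _ => ?_
  ring

lemma linearCombination_autocorrelation (Φ : ℤ × ℤ × ℤ → ℂ) :
    Finsupp.linearCombination ℂ (fun δ => Φ (-δ)) (autocorrelation x w)
      = star w ⬝ᵥ (Matrix.of fun i j => Φ (x i - x j)) *ᵥ w := by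
  simp only [autocorrelation, map_sum, Finsupp.linearCombination_single, smul_eq_mul, neg_sub,
    dotProduct, mulVec, Finset.mul_sum, Pi.star_apply, Matrix.of_apply, Complex.star_def]
  rw [Finset.sum_comm]
  refine Finset.sum_congr rfl fun i _ => Finset.sum_congr rfl fun j _ => ?_
  ring

end Autocorrelation

-- False over `ℝ`, where the quadratic form does not see the antisymmetric part.
lemma Matrix.isHermitian_of_dotProduct_mulVec_nonneg {n : Type*} [Fintype n] [DecidableEq n]
    {A : Matrix n n ℂ} (h : ∀ x, 0 ≤ star x ⬝ᵥ A *ᵥ x) : A.IsHermitian := by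
  rw [← isSymmetric_toEuclideanLin_iff, LinearMap.isSymmetric_iff_inner_map_self_real]
  intro x
  have hx : (0 : ℂ) ≤ inner ℂ x (Matrix.toEuclideanLin A x) := by
    simpa [EuclideanSpace.inner_eq_star_dotProduct, dotProduct_comm] using h (WithLp.ofLp x)
  rw [← inner_conj_symm, Complex.conj_conj, eq_comm, Complex.conj_eq_iff_im]
  exact (Complex.nonneg_iff.mp hx).2.symm

section HermPos

variable {N₁ N₂ N₃ : ℕ} {Φ : ℤ × ℤ × ℤ → ℂ}

lemma HermPos.dotProduct_mulVec_nonneg (hΦ : HermPos N₁ N₂ N₃ Φ)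
    (w : Sbox N₁ N₂ N₃ → ℂ) :
    0 ≤ star w ⬝ᵥ
      (Matrix.of fun p p' : Sbox N₁ N₂ N₃ => Φ ((p : ℤ × ℤ × ℤ) - p')) *ᵥ w := by
  let e := (Fintype.equivFin (Sbox N₁ N₂ N₃)).symm
  convert hΦ _ (fun i => e i) (fun i => (e i).2) (fun i => star (w (e i))) using 1
  simp only [dotProduct, mulVec, Finset.mul_sum]
  refine (Fintype.sum_equiv e _ _ fun i => Fintype.sum_equiv e _ _ fun j => ?_).symm
  simp only [Pi.star_apply, Complex.star_def, Complex.conj_conj, Matrix.of_apply]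
  ring

lemma HermPos.posSemidef (hΦ : HermPos N₁ N₂ N₃ Φ) :
    (Matrix.of fun p p' : Sbox N₁ N₂ N₃ => Φ ((p : ℤ × ℤ × ℤ) - p')).PosSemidef :=
  .of_dotProduct_mulVec_nonneg
    (isHermitian_of_dotProduct_mulVec_nonneg hΦ.dotProduct_mulVec_nonneg)
    hΦ.dotProduct_mulVec_nonneg

end HermPos

lemma Matrix.PosSemidef.mulVec_eq_zero_of_sum_dotProduct_mulVec_eq_zero
    {𝕜 n κ : Type*} [RCLike 𝕜] [Fintype n] [Fintype κ] {A : Matrix n n 𝕜}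
    (hA : A.PosSemidef) {w : κ → n → 𝕜}
    (h : ∑ j, star (w j) ⬝ᵥ A *ᵥ w j = 0) (j : κ) : A *ᵥ w j = 0 :=
  (hA.dotProduct_mulVec_zero_iff _).mp <|
    (Finset.sum_eq_zero_iff_of_nonneg fun j _ => hA.dotProduct_mulVec_nonneg (w j)).mp h j
      (Finset.mem_univ j)

lemma sum_sq_norm_sum_smul_mul {ι κ : Type*} [Fintype ι] [Fintype κ] (c : κ → ℂ)
    (d e : ι → ℂ) :
    ∑ j, (‖∑ i, (c j • d) i * e i‖ : ℂ) ^ 2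
      = ((∑ j, ‖c j‖ ^ 2 : ℝ) : ℂ) * (‖∑ i, d i * e i‖ : ℂ) ^ 2 := by
  simp only [Pi.smul_apply, smul_eq_mul, mul_assoc, ← Finset.mul_sum, norm_mul]
  push_cast
  rw [Finset.sum_mul]
  exact Finset.sum_congr rfl fun j _ => by ring

theorem extremal_of_kernel_dim_one (N₁ N₂ N₃ : ℕ) (Φ : ℤ × ℤ × ℤ → ℂ)
    (hΦ : HermPos N₁ N₂ N₃ Φ)
    (A : Matrix ↥(Sbox N₁ N₂ N₃) ↥(Sbox N₁ N₂ N₃) ℂ)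
    (hA : A = Matrix.of fun (p p' : ↥(Sbox N₁ N₂ N₃)) => Φ ((p : ℤ × ℤ × ℤ) - (p' : ℤ × ℤ × ℤ)))
    (d : ↥(Sbox N₁ N₂ N₃) → ℂ)
    (hdker : A.mulVec d = 0)
    (hker1 : ∀ v : ↥(Sbox N₁ N₂ N₃) → ℂ,
      A.mulVec v = 0 → ∃ c : ℂ, v = c • d)
    (f : ℝ × ℝ × ℝ → ℂ)
    (hf : f = fun v => (‖∑ p : ↥(Sbox N₁ N₂ N₃),
      d p * eChar (p : ℤ × ℤ × ℤ) v‖ : ℂ) ^ 2) :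
    ∀ g h : (ℝ × ℝ × ℝ) → ℂ, g ∈ QSet N₁ N₂ N₃ → h ∈ QSet N₁ N₂ N₃ → f = g + h →
      ∃ c : ℝ, 0 ≤ c ∧ g = fun v => (c : ℂ) * f v := by
  rintro g h ⟨rg, qg, rfl⟩ ⟨rh, qh, rfl⟩ hfgh
  subst hA hf
  have hsum_subtype (q : ℤ × ℤ × ℤ → ℂ) (v : ℝ × ℝ × ℝ) : ∑ p ∈ Sbox N₁ N₂ N₃, q p * eChar p v
      = ∑ p : Sbox N₁ N₂ N₃, q p * eChar p v :=
    (Finset.sum_coe_sort _ _).symm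
  have hcoeffs : autocorrelation Subtype.val d
      = ∑ j, autocorrelation Subtype.val (fun p : Sbox N₁ N₂ N₃ => qg j p)
        + ∑ k, autocorrelation Subtype.val (fun p : Sbox N₁ N₂ N₃ => qh k p) := by
    refine linearIndependent_eChar ?_
    simp only [map_add, map_sum, linearCombination_eChar_autocorrelation]
    funext v
    simpa [hsum_subtype] using congrFun hfgh v
  have hquad := congrArg (Finsupp.linearCombination ℂ fun δ => Φ (-δ)) hcoeffs
  simp only [map_add, map_sum, linearCombination_autocorrelation, hdker, dotProduct_zero] at hquad
  obtain ⟨hg0, -⟩ := (add_eq_zero_iff_of_nonneg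
    (Finset.sum_nonneg fun j _ => hΦ.dotProduct_mulVec_nonneg _)
    (Finset.sum_nonneg fun k _ => hΦ.dotProduct_mulVec_nonneg _)).mp hquad.symm
  choose c hc using fun j =>
    hker1 _ (hΦ.posSemidef.mulVec_eq_zero_of_sum_dotProduct_mulVec_eq_zero hg0 j)
  refine ⟨∑ j, ‖c j‖ ^ 2, by positivity, funext fun v => ?_⟩
  simp only [hsum_subtype, ← sum_sq_norm_sum_smul_mul, ← hc]
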